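/- arXiv:1205.6362 — 6 statements merged into one kernel-verified Lean document; each statement's English description precedes it below -/
import Mathlib

section
/- For all natural numbers m, n and every real (or complex, or commutative ring element) x, 1 = (1-x)^(n+1) * (∑_{k=0}^{m} C(n+k, k) x^k) + x^(m+1) * (∑_{k=0}^{n} C(m+k, k) (1-x)^k). -/
open Finset

/-!
Induction on `m`. For `m = 0` the identity is the geometric sum
`x * ∑_{k ≤ n} (1 - x)^k = 1 - (1 - x)^(n + 1)`. Passing from `m` to `m + 1` adds the term
`C(n + m + 1, m + 1) (1 - x)^(n + 1) x^(m + 1)` to the first summand, and Pascal's rule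
`C(m + k, k) = C(m + 1 + k, k) - C(m + k, k - 1)` rewrites the second sum with `m + 1` in place of
`m` at exactly the cost of that term.
-/

theorem pascal_sum_range_choose_mul_pow {R : Type*} [CommRing R] (m n : ℕ) (y : R) :
    ∑ k ∈ range (n + 1), ((m + k).choose k : R) * y ^ k
      = (1 - y) * ∑ k ∈ range (n + 1), ((m + 1 + k).choose k : R) * y ^ k
        + ((m + n + 1).choose (m + 1) : R) * y ^ (n + 1) := by
  induction n with
  | zero => simp
  | succ n ih =>
    have hsymm : (m + (n + 1)).choose (n + 1) = (m + n + 1).choose m :=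
      Nat.choose_symm_of_eq_add (show m + n + 1 = n + 1 + m by omega)
    have hsymm' : (m + n + 2).choose (n + 1) = (m + n + 2).choose (m + 1) :=
      Nat.choose_symm_of_eq_add (show m + n + 2 = n + 1 + (m + 1) by omega)
    have hpascal : (m + n + 2).choose (m + 1) = (m + n + 1).choose m + (m + n + 1).choose (m + 1) :=
      Nat.choose_succ_succ' (m + n + 1) m
    rw [sum_range_succ, sum_range_succ (fun k => ((m + 1 + k).choose k : R) * y ^ k), ih,
      show m + 1 + (n + 1) = m + n + 2 by omega, show m + (n + 1) + 1 = m + n + 2 by omega,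
      hsymm, hsymm', hpascal]
    push_cast
    ring

theorem chaundy_bullard {R : Type*} [CommRing R] (m n : ℕ) (x : R) :
    1 = (1 - x) ^ (n + 1) * (∑ k ∈ Finset.range (m + 1), ((n + k).choose k : R) * x ^ k)
      + x ^ (m + 1) * (∑ k ∈ Finset.range (n + 1), ((m + k).choose k : R) * (1 - x) ^ k) := by
  induction m with
  | zero =>
    have hgeom := geom_sum_mul (1 - x) (n + 1)
    simp only [zero_add, sum_range_one, Nat.choose_self, Nat.choose_zero_right, Nat.cast_one,
      one_mul, pow_zero, mul_one, pow_one]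
    linear_combination hgeom
  | succ m ih =>
    have hpascal := pascal_sum_range_choose_mul_pow m n (1 - x)
    rw [sum_range_succ, add_comm n (m + 1), add_right_comm m 1 n]
    linear_combination ih + x ^ (m + 1) * hpascal
end

section
/- For all positive integers n, p and every real x with x ≠ 1, ∑_{k=0}^{n-1} C(p+k-1, k) x^k = (1-x)^(-p) - (1-x)^(-p) * x^n * ∑_{k=0}^{p-1} C(n+k-1, k) (1-x)^k. -/
/-!
Put `y = 1 - x` and let `S(m, q)` be
`y ^ (q + 1) * ∑_{k ≤ m} C(q+k, k) x^k + x ^ (m + 1) * ∑_{k ≤ q} C(m+k, k) y^k`.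
Then `S(0, q) = S(m, 0) = 1` by the geometric sum, and Pascal's rule applied to both sums gives
`S(m+1, q+1) = x * S(m, q+1) + y * S(m+1, q)`, so `S ≡ 1` by induction since `x + y = 1`.
Dividing `S(n-1, p-1) = 1` by `(1 - x) ^ p` is the stated form.
-/

open Finset

variable {R : Type*}

section Semiring

variable [Semiring R]

def figurateSum (p n : ℕ) (x : R) : R :=
  ∑ k ∈ range n, ((p + k).choose k : R) * x ^ k

theorem figurateSum_zero_left (n : ℕ) (x : R) : figurateSum 0 n x = ∑ k ∈ range n, x ^ k := by
  simp [figurateSum]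

theorem figurateSum_one (p : ℕ) (x : R) : figurateSum p 1 x = 1 := by
  simp [figurateSum]

end Semiring

theorem figurateSum_succ_succ [CommSemiring R] (p n : ℕ) (x : R) :
    figurateSum (p + 1) (n + 1) x = x * figurateSum (p + 1) n x + figurateSum p (n + 1) x := by
  have pascal : ∀ k, ((p + 1 + (k + 1)).choose (k + 1) : R) * x ^ (k + 1)
      = x * (((p + 1 + k).choose k : R) * x ^ k) + ((p + (k + 1)).choose (k + 1) : R) * x ^ (k + 1) := by
    intro k
    rw [show p + 1 + (k + 1) = p + 1 + k + 1 by omega, Nat.choose_succ_succ',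
      show p + 1 + k = p + (k + 1) by omega]
    push_cast
    ring
  simp only [figurateSum, sum_range_succ' _ n, pascal, sum_add_distrib, mul_sum]
  simp [add_assoc]

section CommRing

variable [CommRing R]

theorem chaundy_bullard_zero {x y : R} (hxy : x + y = 1) (q : ℕ) :
    y ^ (q + 1) * figurateSum q 1 x + x * figurateSum 0 (q + 1) y = 1 := by
  rw [figurateSum_one, figurateSum_zero_left, eq_sub_of_add_eq hxy]
  linear_combination mul_neg_geom_sum y (q + 1)

theorem chaundy_bullard_s1 {x y : R} (hxy : x + y = 1) (m q : ℕ) :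
    y ^ (q + 1) * figurateSum q (m + 1) x + x ^ (m + 1) * figurateSum m (q + 1) y = 1 := by
  induction m generalizing q with
  | zero => simpa using chaundy_bullard_zero hxy q
  | succ m ihm =>
    induction q with
    | zero =>
      linear_combination chaundy_bullard_zero ((add_comm y x).trans hxy) (m + 1)
    | succ q ihq =>
      rw [figurateSum_succ_succ q, figurateSum_succ_succ m]
      linear_combination x * ihm (q + 1) + y * ihq + hxy

end CommRing

theorem de_moivre_chaundy_bullard (n p : ℕ) (hn : 1 ≤ n) (hp : 1 ≤ p) (x : ℝ) (hx : x ≠ 1) :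
    ∑ k ∈ Finset.range n, ((p + k - 1).choose k : ℝ) * x ^ k
      = (1 - x) ^ (-(p : ℤ))
        - (1 - x) ^ (-(p : ℤ)) * x ^ n
          * ∑ k ∈ Finset.range p, ((n + k - 1).choose k : ℝ) * (1 - x) ^ k := by
  obtain ⟨m, rfl⟩ := Nat.exists_eq_add_of_le' hn
  obtain ⟨q, rfl⟩ := Nat.exists_eq_add_of_le' hp
  have hy : (1 - x) ^ (q + 1) ≠ 0 := pow_ne_zero _ (sub_ne_zero.mpr hx.symm)
  have identity := chaundy_bullard_s1 (add_sub_cancel x 1) m q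
  simp only [figurateSum] at identity
  simp only [Nat.add_sub_cancel, add_right_comm _ 1, zpow_neg, zpow_natCast]
  field_simp
  linear_combination identity
end

section
/- For all positive integers m, n and every real p, p^n * ∑_{k=0}^{m-1} C(n+k-1, k) (1-p)^k + (1-p)^m * ∑_{k=0}^{n-1} C(m+k-1, k) p^k = 1. -/
/-!
Let `W(n, m)` be the chance that a player who wins each round with probability `p` and still
needs `n` rounds beats an opponent who still needs `m`. Conditioning on the next round gives
`W(n, m) = p W(n - 1, m) + (1 - p) W(n, m - 1)`, and the opponent's chance satisfies the same
recursion with the roles exchanged. Hence the sum of the two chances satisfies it too; it is `1`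
on the boundary where one player needs no more rounds, so it is `1` everywhere since
`p + (1 - p) = 1`.
-/

open Finset

namespace ProblemOfPoints

variable {R : Type*} [CommRing R]

/-- The player wins at round `n + k` after losing exactly `k < m` rounds; the last round is won,
so the losses fall among the first `n + k - 1` rounds. -/
def winProb (p : R) (n m : ℕ) : R :=
  p ^ n * ∑ k ∈ range m, ((n + k - 1).choose k : R) * (1 - p) ^ k

theorem winProb_zero_left (p : R) {m : ℕ} (hm : m ≠ 0) : winProb p 0 m = 1 := by
  obtain ⟨m, rfl⟩ := Nat.exists_eq_succ_of_ne_zero hm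
  simp [winProb, sum_range_succ']

@[simp]
theorem winProb_zero_right (p : R) (n : ℕ) : winProb p n 0 = 0 := by
  simp [winProb]

theorem sum_range_succ_choose_mul_pow (n m : ℕ) (x : R) :
    ∑ k ∈ range (m + 1), ((n + k).choose k : R) * x ^ k
      = ∑ k ∈ range (m + 1), ((n + k - 1).choose k : R) * x ^ k
        + x * ∑ k ∈ range m, ((n + k).choose k : R) * x ^ k := by
  have pascal (k : ℕ) : ((n + (k + 1)).choose (k + 1) : R)
      = ((n + (k + 1) - 1).choose (k + 1) : R) + ((n + k).choose k : R) := by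
    rw [show n + (k + 1) - 1 = n + k by omega, ← add_assoc, Nat.choose_succ_succ', Nat.cast_add,
      add_comm]
  rw [sum_range_succ', sum_range_succ' (fun k => ((n + k - 1).choose k : R) * x ^ k), mul_sum]
  simp only [pascal, add_mul, sum_add_distrib, pow_succ']
  simp only [add_zero, Nat.choose_zero_right, mul_left_comm x]
  ring

theorem winProb_succ_succ (p : R) (n m : ℕ) :
    winProb p (n + 1) (m + 1) = p * winProb p n (m + 1) + (1 - p) * winProb p (n + 1) m := by
  simp only [winProb, Nat.add_sub_cancel, add_right_comm n 1,
    sum_range_succ_choose_mul_pow n m (1 - p)]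
  ring

theorem winProb_add_winProb_one_sub (p : R) {n m : ℕ} (h : n ≠ 0 ∨ m ≠ 0) :
    winProb p n m + winProb (1 - p) m n = 1 := by
  induction n generalizing m with
  | zero => simp [winProb_zero_left p (h.resolve_left (not_not.mpr rfl))]
  | succ n ihn =>
    induction m with
    | zero => simp [winProb_zero_left]
    | succ m ihm =>
      have ihn := ihn (m := m + 1) (Or.inr m.succ_ne_zero)
      have ihm := ihm (Or.inl n.succ_ne_zero)
      rw [winProb_succ_succ, winProb_succ_succ, sub_sub_cancel]
      linear_combination p * ihn + (1 - p) * ihm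

end ProblemOfPoints

open ProblemOfPoints in
theorem de_montmort_problem_of_points_general (m n : ℕ) (hn : 1 ≤ n) (p : ℝ) :
    p ^ n * ∑ k ∈ Finset.range m, ((n + k - 1).choose k : ℝ) * (1 - p) ^ k
      + (1 - p) ^ m * ∑ k ∈ Finset.range n, ((m + k - 1).choose k : ℝ) * p ^ k = 1 := by
  simpa only [winProb, sub_sub_cancel] using
    winProb_add_winProb_one_sub p (Or.inl (Nat.one_le_iff_ne_zero.mp hn) : n ≠ 0 ∨ m ≠ 0)

theorem de_montmort_problem_of_points (m n : ℕ) (hm : 1 ≤ m) (hn : 1 ≤ n) (p : ℝ) :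
    p ^ n * ∑ k ∈ Finset.range m, ((n + k - 1).choose k : ℝ) * (1 - p) ^ k
      + (1 - p) ^ m * ∑ k ∈ Finset.range n, ((m + k - 1).choose k : ℝ) * p ^ k = 1 :=
  de_montmort_problem_of_points_general m n hn p
end

section
/- For all positive integers m, n and every real p, ∑_{k=0}^{m-1} C(m+n-1, k) p^(m+n-k-1) (1-p)^k = p^n * ∑_{k=0}^{m-1} C(n+k-1, k) (1-p)^k. -/
/-!
With `q = 1 - p`, the left side is the probability of at most `m - 1` failures in `m + n - 1`
trials. Conditioning on the last trial, at most `m` failures in `N + 1` trials means at most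
`m - 1` failures in the first `N`, or exactly `m` of them followed by a success. So raising `m`
by one adds `p ^ n C(n + m - 1, m) q ^ m` to the left side, which is the new term on the right
(the game is won at trial `n + m` after `m` failures).
-/

open Finset

section
variable {R : Type*} [CommSemiring R] (p q : R)

theorem choose_succ_succ_mul_pow_mul_pow (N k : ℕ) :
    ((N + 1).choose (k + 1) : R) * p ^ (N - k) * q ^ (k + 1)
      = q * (N.choose k * p ^ (N - k) * q ^ k)
        + p * (N.choose (k + 1) * p ^ (N - (k + 1)) * q ^ (k + 1)) := by
  have hsucc : (N.choose (k + 1) : R) * (p * p ^ (N - (k + 1)))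
      = N.choose (k + 1) * p ^ (N - k) := by
    rcases lt_or_ge N (k + 1) with hN | hN
    · simp [Nat.choose_eq_zero_of_lt hN]
    · rw [← pow_succ', Nat.sub_add_eq, Nat.sub_add_cancel (by omega)]
  rw [Nat.choose_succ_succ', Nat.cast_add, add_mul, ← hsucc]
  ring

theorem sum_range_succ_choose_succ_mul_pow_mul_pow (hpq : p + q = 1) (N m : ℕ) :
    ∑ k ∈ range (m + 1), ((N + 1).choose k : R) * p ^ (N + 1 - k) * q ^ k
      = ∑ k ∈ range m, (N.choose k : R) * p ^ (N - k) * q ^ k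
        + p * (N.choose m * p ^ (N - m) * q ^ m) := by
  set b : ℕ → R := fun k ↦ N.choose k * p ^ (N - k) * q ^ k with hb
  have hshift : ∑ k ∈ range (m + 1), ((N + 1).choose k : R) * p ^ (N + 1 - k) * q ^ k
      = p * ∑ k ∈ range (m + 1), b k + q * ∑ k ∈ range m, b k := by
    rw [sum_range_succ', sum_range_succ' b, mul_add, mul_sum, mul_sum]
    simp only [Nat.add_sub_add_right, choose_succ_succ_mul_pow_mul_pow, sum_add_distrib, hb]
    simp only [Nat.choose_zero_right, Nat.cast_one, Nat.sub_zero, pow_zero, mul_one, one_mul,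
      pow_succ']
    ring
  rw [hshift, sum_range_succ, mul_add, add_right_comm, ← add_mul, hpq, one_mul]

theorem sum_range_choose_add_mul_pow_mul_pow (hpq : p + q = 1) (m n : ℕ) :
    ∑ k ∈ range m, ((m + n).choose k : R) * p ^ (m + n - k) * q ^ k
      = p ^ (n + 1) * ∑ k ∈ range m, ((n + k).choose k : R) * q ^ k := by
  induction m with
  | zero => simp
  | succ m ih =>
    rw [show m + 1 + n = m + n + 1 by omega, sum_range_succ_choose_succ_mul_pow_mul_pow p q hpq,
      ih, sum_range_succ, show m + n - m = n by omega, add_comm n m]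
    ring

end

theorem negative_binomial_eq_binomial_general (m n : ℕ) (hn : 1 ≤ n) (p : ℝ) :
    ∑ k ∈ Finset.range m, ((m + n - 1).choose k : ℝ) * p ^ (m + n - k - 1) * (1 - p) ^ k
      = p ^ n * ∑ k ∈ Finset.range m, ((n + k - 1).choose k : ℝ) * (1 - p) ^ k := by
  obtain ⟨n, rfl⟩ := Nat.exists_eq_add_of_le' hn
  have hpq : p + (1 - p) = 1 := add_sub_cancel p 1
  simpa only [← add_assoc, Nat.add_sub_cancel, Nat.add_right_comm n 1, Nat.sub_right_comm _ _ 1]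
    using sum_range_choose_add_mul_pow_mul_pow p (1 - p) hpq m n

theorem negative_binomial_eq_binomial (m n : ℕ) (hm : 1 ≤ m) (hn : 1 ≤ n) (p : ℝ) :
    ∑ k ∈ Finset.range m, ((m + n - 1).choose k : ℝ) * p ^ (m + n - k - 1) * (1 - p) ^ k
      = p ^ n * ∑ k ∈ Finset.range m, ((n + k - 1).choose k : ℝ) * (1 - p) ^ k :=
  negative_binomial_eq_binomial_general m n hn p
end

section
/- For all positive integers m, n and every real x with |x - 1| > 1, the partial sum ∑_{k=0}^{n-1} (m)_k / k! * x^k equals ((m)_{n-1}/(n-1)!) * x^n/(x-1) times the sum of the two series ∑_{k=0}^{m-1} (-m+1)_k/(-m-n+2)_k * (1-x)^(-k) + ∑_{k=m+n-1}^{∞} (-m-n+k+2)_{n-1}/(-m-n+2)_{n-1} * (1-x)^(-k), where (a)_k denotes the rising factorial. -/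
/-!
Write `m = M + 1`, `n = N + 1` and `y = 1 - x`. All the Pochhammer quotients are binomial
coefficients up to sign: `(M + 1)_k / k! = C(M + k, k)` and `(-a)_k = (-1)^k a(a-1)⋯(a-k+1)`.
Reversing the order of summation, the finite sum becomes
`y^(-M) ∑_{j ≤ M} C(N + j, j) y^j / C(M + N, N)`, and the tail is a negative binomial series in
`1/y` summing to `-y^(-M) / (C(M + N, N) x^n)`. The identity is then a rearrangement of the
Chaundy–Bullard identity
`(1 - x)^(M+1) ∑_{k ≤ N} C(M + k, k) x^k + x^(N+1) ∑_{k ≤ M} C(N + k, k) (1 - x)^k = 1`,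
which follows by induction on `M` and `N` from Pascal's rule.
-/

/-- The Pochhammer symbol (rising factorial) `(a)_k = a(a+1)⋯(a+k-1)` for real `a`. -/
def risingFactorial (a : ℝ) (k : ℕ) : ℝ := ∏ i ∈ Finset.range k, (a + i)

open Finset Nat Polynomial

lemma risingFactorial_eq_ascPochhammer_eval (a : ℝ) (k : ℕ) :
    risingFactorial a k = (ascPochhammer ℝ k).eval a := by
  induction k with
  | zero => simp [risingFactorial]
  | succ k ih => rw [risingFactorial, prod_range_succ, ← risingFactorial, ih, ascPochhammer_succ_eval]

lemma risingFactorial_natCast_succ (M k : ℕ) :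
    risingFactorial ((M + 1 : ℕ) : ℝ) k = k ! * (M + k).choose k := by
  rw [risingFactorial_eq_ascPochhammer_eval, ascPochhammer_nat_eq_natCast_ascFactorial,
    Nat.ascFactorial_eq_factorial_mul_choose, Nat.cast_mul]

lemma risingFactorial_natCast_succ_div_factorial (M k : ℕ) :
    risingFactorial ((M + 1 : ℕ) : ℝ) k / k ! = (M + k).choose k := by
  rw [risingFactorial_natCast_succ, mul_div_cancel_left₀ _ (by positivity)]

lemma risingFactorial_neg_natCast (a k : ℕ) :
    risingFactorial (-(a : ℝ)) k = (-1) ^ k * a.descFactorial k := by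
  rw [risingFactorial_eq_ascPochhammer_eval, ascPochhammer_eval_neg_eq_descPochhammer,
    descPochhammer_eval_eq_descFactorial]

lemma Nat.add_choose_mul_descFactorial {M k : ℕ} (N : ℕ) (hk : k ≤ M) :
    (M + N).choose N * M.descFactorial k = (M + N).descFactorial k * (M + N - k).choose N := by
  have h := Nat.choose_mul (n := M + N) hk
  rw [Nat.choose_symm_of_eq_add (show M + N - k = (M - k) + N by omega)] at h
  rw [Nat.descFactorial_eq_factorial_mul_choose, Nat.descFactorial_eq_factorial_mul_choose,
    ← Nat.choose_symm_add, mul_left_comm, h, mul_assoc]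

section ChaundyBullard

variable {R : Type*} [CommRing R]

/-- Partial sums of `(1 - x)^(-(a+1)) = ∑ C(a + k, k) x^k`. -/
def negBinomialPartialSum (a b : ℕ) (x : R) : R := ∑ k ∈ range b, ((a + k).choose k : R) * x ^ k

lemma negBinomialPartialSum_zero (b : ℕ) (x : R) :
    negBinomialPartialSum 0 b x = ∑ k ∈ range b, x ^ k := by
  simp [negBinomialPartialSum]

lemma negBinomialPartialSum_one (a : ℕ) (x : R) : negBinomialPartialSum a 1 x = 1 := by
  simp [negBinomialPartialSum]

lemma negBinomialPartialSum_succ_succ (a b : ℕ) (x : R) :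
    negBinomialPartialSum (a + 1) (b + 1) x
      = x * negBinomialPartialSum (a + 1) b x + negBinomialPartialSum a (b + 1) x := by
  have pascal (k : ℕ) : ((a + 1 + (k + 1)).choose (k + 1) : R)
      = (a + 1 + k).choose k + (a + (k + 1)).choose (k + 1) := by
    rw [show a + 1 + (k + 1) = a + 1 + k + 1 by omega, Nat.choose_succ_succ',
      show a + 1 + k = a + (k + 1) by omega, Nat.cast_add]
  rw [mul_comm x]
  simp only [negBinomialPartialSum, sum_range_succ' _ b, pascal, sum_mul, add_mul, sum_add_distrib,
    Nat.choose_zero_right, pow_succ, mul_assoc]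
  ring

theorem chaundy_bullard_s7 (a b : ℕ) (x : R) :
    (1 - x) ^ (a + 1) * negBinomialPartialSum a (b + 1) x
      + x ^ (b + 1) * negBinomialPartialSum b (a + 1) (1 - x) = 1 := by
  induction a generalizing b with
  | zero =>
    rw [negBinomialPartialSum_zero, negBinomialPartialSum_one]
    linear_combination -geom_sum_mul x (b + 1)
  | succ a iha =>
    induction b with
    | zero =>
      rw [negBinomialPartialSum_zero, negBinomialPartialSum_one]
      linear_combination -geom_sum_mul (1 - x) (a + 2)
    | succ b ihb =>
      linear_combination (1 - x) ^ (a + 2) * negBinomialPartialSum_succ_succ a (b + 1) x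
        + x ^ (b + 2) * negBinomialPartialSum_succ_succ b (a + 1) (1 - x)
        + x * ihb + (1 - x) * iha (b + 1)

end ChaundyBullard

lemma risingFactorial_neg_div_risingFactorial_neg {M k : ℕ} (N : ℕ) (hk : k ≤ M) :
    risingFactorial (-(M : ℝ)) k / risingFactorial (-((M + N : ℕ) : ℝ)) k
      = ((M + N - k).choose N : ℝ) / (M + N).choose N := by
  have hdesc : ((M + N).descFactorial k : ℝ) ≠ 0 := by
    exact_mod_cast (Nat.descFactorial_pos.2 (by omega)).ne'
  have hchoose : ((M + N).choose N : ℝ) ≠ 0 := by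
    exact_mod_cast (Nat.choose_pos (by omega)).ne'
  rw [risingFactorial_neg_natCast, risingFactorial_neg_natCast,
    mul_div_mul_left _ _ (pow_ne_zero _ (by norm_num)), div_eq_div_iff hdesc hchoose]
  exact_mod_cast (mul_comm _ _).trans ((Nat.add_choose_mul_descFactorial N hk).trans (mul_comm _ _))

lemma sum_risingFactorial_neg_div_mul_zpow (M N : ℕ) {y : ℝ} (hy : y ≠ 0) :
    ∑ k ∈ range (M + 1),
        risingFactorial (-(M : ℝ)) k / risingFactorial (-((M + N : ℕ) : ℝ)) k * y ^ (-(k : ℤ))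
      = y ^ (-(M : ℤ)) * negBinomialPartialSum N (M + 1) y / (M + N).choose N := by
  rw [negBinomialPartialSum, mul_sum, sum_div, ← sum_range_reflect]
  refine sum_congr rfl fun k hk => ?_
  have hkM : k ≤ M := Nat.lt_succ_iff.1 (mem_range.1 hk)
  rw [add_tsub_cancel_right, risingFactorial_neg_div_risingFactorial_neg N (Nat.sub_le M k),
    show M + N - (M - k) = N + k by omega, Nat.choose_symm_add, ← zpow_natCast y k,
    Nat.cast_sub hkM, show -((M : ℤ) - k) = -M + k by ring, zpow_add₀ hy]
  ring

lemma tsum_risingFactorial_div_mul_zpow (M N : ℕ) {y : ℝ} (hy : 1 < |y|) :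
    ∑' j : ℕ, risingFactorial ((j + 1 : ℕ) : ℝ) N / risingFactorial (-((M + N : ℕ) : ℝ)) N
        * y ^ (-((M + N + 1 + j : ℕ) : ℤ))
      = (-1) ^ N * y ^ (-(M : ℤ)) / ((M + N).choose N * (y - 1) ^ (N + 1)) := by
  have hy0 : y ≠ 0 := abs_pos.1 (one_pos.trans hy)
  have hr : ‖y⁻¹‖ < 1 := by rw [norm_inv, Real.norm_eq_abs]; exact inv_lt_one_of_one_lt₀ hy
  have hchoose : ((M + N).choose N : ℝ) ≠ 0 := by
    exact_mod_cast (Nat.choose_pos (by omega)).ne'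
  have hterm (j : ℕ) : risingFactorial ((j + 1 : ℕ) : ℝ) N / risingFactorial (-((M + N : ℕ) : ℝ)) N
        * y ^ (-((M + N + 1 + j : ℕ) : ℤ))
      = (-1) ^ N * (y ^ (M + N + 1))⁻¹ / (M + N).choose N * ((j + N).choose N * y⁻¹ ^ j) := by
    rw [risingFactorial_natCast_succ, risingFactorial_neg_natCast,
      Nat.descFactorial_eq_factorial_mul_choose, zpow_neg, zpow_natCast, pow_add, mul_inv, inv_pow]
    push_cast
    field_simp
    rw [← pow_mul, (even_two.mul_left N).neg_one_pow, mul_one]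
  rw [tsum_congr hterm, tsum_mul_left, tsum_choose_mul_geometric_of_norm_lt_one N hr, zpow_neg,
    zpow_natCast, show 1 - y⁻¹ = (y - 1) / y by field_simp, div_pow]
  field_simp
  ring

theorem hering_intermediate_identity (m n : ℕ) (hm : 1 ≤ m) (hn : 1 ≤ n) (x : ℝ)
    (hx : 1 < |x - 1|) :
    ∑ k ∈ Finset.range n, risingFactorial m k / (k.factorial : ℝ) * x ^ k
      = risingFactorial m (n - 1) / ((n - 1).factorial : ℝ) * (x ^ n / (x - 1))
        * ((∑ k ∈ Finset.range m,
              risingFactorial (-(m : ℝ) + 1) k / risingFactorial (-(m : ℝ) - n + 2) k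
                * (1 - x) ^ (-(k : ℤ)))
          + ∑' j : ℕ,
              risingFactorial (-(m : ℝ) - n + ((m + n - 1 + j : ℕ) : ℝ) + 2) (n - 1)
                / risingFactorial (-(m : ℝ) - n + 2) (n - 1)
                * (1 - x) ^ (-((m + n - 1 + j : ℕ) : ℤ))) := by
  obtain ⟨M, rfl⟩ : ∃ M, m = M + 1 := ⟨m - 1, by omega⟩
  obtain ⟨N, rfl⟩ : ∃ N, n = N + 1 := ⟨n - 1, by omega⟩
  have hy : 1 < |1 - x| := by rwa [abs_sub_comm]
  have hx0 : x ≠ 0 := by rintro rfl; norm_num at hx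
  have hx1 : x - 1 ≠ 0 := abs_pos.1 (one_pos.trans hx)
  have hy0 : 1 - x ≠ 0 := abs_pos.1 (one_pos.trans hy)
  have hchoose : ((M + N).choose N : ℝ) ≠ 0 := by
    exact_mod_cast (Nat.choose_pos (by omega)).ne'
  have harg₁ : -((M + 1 : ℕ) : ℝ) + 1 = -(M : ℝ) := by push_cast; ring
  have harg₂ : -((M + 1 : ℕ) : ℝ) - ((N + 1 : ℕ) : ℝ) + 2 = -((M + N : ℕ) : ℝ) := by push_cast; ring
  have harg₃ (j : ℕ) : -((M + 1 : ℕ) : ℝ) - ((N + 1 : ℕ) : ℝ) + ((M + N + 1 + j : ℕ) : ℝ) + 2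
      = ((j + 1 : ℕ) : ℝ) := by push_cast; ring
  simp only [risingFactorial_natCast_succ_div_factorial, add_tsub_cancel_right,
    show M + 1 + (N + 1) - 1 = M + N + 1 by omega, harg₁, harg₂, harg₃]
  rw [← negBinomialPartialSum, sum_risingFactorial_neg_div_mul_zpow M N hy0,
    tsum_risingFactorial_div_mul_zpow M N hy, sub_sub_cancel_left, zpow_neg, zpow_natCast]
  have hsign : x ^ (N + 1) * ((-1) ^ N / (-x) ^ (N + 1)) = -1 := by
    rw [neg_pow x, pow_succ (-1 : ℝ)]
    field_simp
  field_simp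
  linear_combination -chaundy_bullard_s7 M N x - hsign
end

section
/- For all positive integers m, n and every real p with 0 ≤ p ≤ 1, the quantity p * ∑_{k=0}^{m-1} C(n+k-1, k) p^(n-1) (1-p)^k lies in [0,1], and together with (1-p) * ∑_{k=0}^{n-1} C(m+k-1, k) p^k (1-p)^(m-1) sums to 1. -/
/-!
Pierre's and Paul's winning probabilities add up to one by induction on the number of wins Paul
still needs: with no further win needed by Paul it is a geometric sum, and raising it by one is
absorbed by an identity, proved from Pascal's rule by induction on Pierre's count, that trades the
factor `y = 1 - x` against a single term of Paul's sum.
-/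

open Finset

variable {R : Type*} [CommRing R]

/-- The probability of collecting `a + 1` wins before the opponent collects `b + 1`, when each
round is won with probability `x` and lost with probability `y`: the deciding round is a win,
preceded by `a` wins and `k ≤ b` losses in some order. -/
def winProb (x y : R) (a b : ℕ) : R :=
  x ^ (a + 1) * ∑ k ∈ range (b + 1), ((a + k).choose k : R) * y ^ k

lemma mul_sum_choose_pow_eq_sub {x y : R} (h : x + y = 1) (a b : ℕ) :
    y * ∑ k ∈ range (a + 1), ((b + 1 + k).choose k : R) * x ^ k
      = ∑ k ∈ range (a + 1), ((b + k).choose k : R) * x ^ k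
        - x ^ (a + 1) * ((a + b + 1).choose (b + 1) : R) := by
  obtain rfl : y = 1 - x := eq_sub_of_add_eq' h
  induction a with
  | zero => simp
  | succ a ih =>
    have hsymm : (b + 1 + (a + 1)).choose (a + 1) = (a + 1 + b + 1).choose (b + 1) := by
      rw [show b + 1 + (a + 1) = a + 1 + b + 1 by omega]
      exact Nat.choose_symm_of_eq_add (by omega)
    have hpascal : (a + 1 + b + 1).choose (b + 1) = (b + (a + 1)).choose (a + 1)
        + (a + b + 1).choose (b + 1) := by
      rw [Nat.choose_succ_succ', show a + 1 + b = b + (a + 1) by omega, Nat.choose_symm_add,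
        show a + b + 1 = b + (a + 1) by omega]
    rw [sum_range_succ, mul_add, ih, sum_range_succ _ (a + 1), hsymm, hpascal]
    push_cast
    ring

theorem winProb_add_winProb_swap {x y : R} (h : x + y = 1) (a b : ℕ) :
    winProb x y a b + winProb y x b a = 1 := by
  induction b with
  | zero =>
    obtain rfl : y = 1 - x := eq_sub_of_add_eq' h
    simp [winProb, mul_neg_geom_sum]
  | succ b ih =>
    rw [← ih]
    simp only [winProb]
    rw [sum_range_succ, pow_succ y (b + 1), mul_assoc, mul_sum_choose_pow_eq_sub h,
      show a + (b + 1) = a + b + 1 from rfl]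
    ring

lemma winProb_nonneg [PartialOrder R] [IsOrderedRing R] {x y : R} (hx : 0 ≤ x) (hy : 0 ≤ y) (a b : ℕ) : 0 ≤ winProb x y a b := by
  unfold winProb
  positivity

lemma mul_sum_choose_mul_pow_eq_winProb {n m : ℕ} (hn : 1 ≤ n) (hm : 1 ≤ m) (x y : R) :
    x * ∑ k ∈ range m, ((n + k - 1).choose k : R) * x ^ (n - 1) * y ^ k
      = winProb x y (n - 1) (m - 1) := by
  obtain ⟨a, rfl⟩ := Nat.exists_eq_add_of_le' hn
  obtain ⟨b, rfl⟩ := Nat.exists_eq_add_of_le' hm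
  simp only [winProb, Nat.add_sub_cancel, mul_sum, pow_succ']
  refine sum_congr rfl fun k _ => ?_
  rw [show a + 1 + k - 1 = a + k by omega]
  ring

theorem de_montmort_probabilities (m n : ℕ) (hm : 1 ≤ m) (hn : 1 ≤ n) (p : ℝ)
    (hp0 : 0 ≤ p) (hp1 : p ≤ 1) :
    (p * ∑ k ∈ Finset.range m, ((n + k - 1).choose k : ℝ) * p ^ (n - 1) * (1 - p) ^ k)
        ∈ Set.Icc (0 : ℝ) 1
      ∧ (p * ∑ k ∈ Finset.range m, ((n + k - 1).choose k : ℝ) * p ^ (n - 1) * (1 - p) ^ k)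
          + (1 - p) * ∑ k ∈ Finset.range n,
              ((m + k - 1).choose k : ℝ) * p ^ k * (1 - p) ^ (m - 1) = 1 := by
  simp_rw [mul_right_comm _ (p ^ _) ((1 - p) ^ (m - 1))]
  rw [mul_sum_choose_mul_pow_eq_winProb hn hm, mul_sum_choose_mul_pow_eq_winProb hm hn]
  have hsum := winProb_add_winProb_swap (add_sub_cancel p 1) (n - 1) (m - 1)
  have hq : 0 ≤ 1 - p := sub_nonneg.mpr hp1
  have hP := winProb_nonneg hp0 hq (n - 1) (m - 1)
  have hQ := winProb_nonneg hq hp0 (m - 1) (n - 1)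
  exact ⟨⟨hP, by linarith⟩, hsum⟩
end
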